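/- Assuming Putinar's Positivstellensatz (if M_g is Archimedean and f > 0 on S_g then f ∈ M_g), the following degree-bounded version holds: for all L ∈ ℕ there exists N ∈ ℕ such that every f ∈ ℝ[X_1,…,X_n] with deg(f) ≤ L, ‖f‖ ≤ L, and f(x) ≥ 1/L for all x ∈ S_g, satisfies f ∈ M_g[N]. -/

import Mathlib

def IsSOS {n : ℕ} (p : MvPolynomial (Fin n) ℝ) : Prop :=
  ∃ (k : ℕ) (q : Fin k → MvPolynomial (Fin n) ℝ), p = ∑ i, q i ^ 2

def QM {n m : ℕ} (g : Fin m → MvPolynomial (Fin n) ℝ) :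
    Set (MvPolynomial (Fin n) ℝ) :=
  {f | ∃ (s₀ : MvPolynomial (Fin n) ℝ) (s : Fin m → MvPolynomial (Fin n) ℝ),
    IsSOS s₀ ∧ (∀ i, IsSOS (s i)) ∧ f = s₀ + ∑ i, g i * s i}

def QMtrunc {n m : ℕ} (g : Fin m → MvPolynomial (Fin n) ℝ) (N : ℕ) :
    Set (MvPolynomial (Fin n) ℝ) :=
  {f | ∃ (s₀ : MvPolynomial (Fin n) ℝ) (s : Fin m → MvPolynomial (Fin n) ℝ),
    IsSOS s₀ ∧ (∀ i, IsSOS (s i)) ∧ s₀.totalDegree ≤ N ∧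
    (∀ i, (g i * s i).totalDegree ≤ N) ∧ f = s₀ + ∑ i, g i * s i}

def polyNorm {n : ℕ} (f : MvPolynomial (Fin n) ℝ) : ℝ :=
  ∑ d ∈ f.support, |f.coeff d|

open MvPolynomial

lemma sos_zero {n : ℕ} : IsSOS (0 : MvPolynomial (Fin n) ℝ) := ⟨0, ![], by simp⟩

lemma sos_add {n : ℕ} {p q : MvPolynomial (Fin n) ℝ} (hp : IsSOS p) (hq : IsSOS q) :
    IsSOS (p + q) := by
  obtain ⟨k, a, rfl⟩ := hp
  obtain ⟨l, b, rfl⟩ := hq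
  exact ⟨k + l, Fin.append a b, by
    rw [Fin.sum_univ_add]
    simp [Fin.append_left, Fin.append_right]⟩

lemma sos_C {n : ℕ} {r : ℝ} (hr : 0 ≤ r) : IsSOS (C r : MvPolynomial (Fin n) ℝ) :=
  ⟨1, ![C (Real.sqrt r)], by
    simp [← map_pow, Real.sq_sqrt hr]⟩

lemma sos_C_mul {n : ℕ} {r : ℝ} (hr : 0 ≤ r) {p : MvPolynomial (Fin n) ℝ} (hp : IsSOS p) :
    IsSOS (C r * p) := by
  obtain ⟨k, a, rfl⟩ := hp
  refine ⟨k, fun i => C (Real.sqrt r) * a i, ?_⟩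
  rw [Finset.mul_sum]
  congr 1; ext i
  rw [mul_pow, ← map_pow, Real.sq_sqrt hr]

lemma sos_eval_nonneg {n : ℕ} {p : MvPolynomial (Fin n) ℝ} (hp : IsSOS p) (x : Fin n → ℝ) :
    0 ≤ eval x p := by
  obtain ⟨k, a, rfl⟩ := hp
  rw [map_sum]
  exact Finset.sum_nonneg fun i _ => by rw [map_pow]; positivity

lemma qmt_subset_qm {n m : ℕ} {g : Fin m → MvPolynomial (Fin n) ℝ} {N : ℕ} :
    QMtrunc g N ⊆ QM g := by
  rintro f ⟨s₀, s, h0, hs, -, -, rfl⟩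
  exact ⟨s₀, s, h0, hs, rfl⟩

lemma qm_eval_nonneg {n m : ℕ} {g : Fin m → MvPolynomial (Fin n) ℝ}
    {f : MvPolynomial (Fin n) ℝ} (hf : f ∈ QM g) {x : Fin n → ℝ}
    (hx : ∀ i, 0 ≤ eval x (g i)) : 0 ≤ eval x f := by
  obtain ⟨s₀, s, h0, hs, rfl⟩ := hf
  rw [map_add, map_sum]
  have h1 := sos_eval_nonneg h0 x
  have h2 : ∀ i ∈ Finset.univ, (0:ℝ) ≤ eval x (g i * s i) := fun i _ => by
    rw [map_mul]; exact mul_nonneg (hx i) (sos_eval_nonneg (hs i) x)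
  exact add_nonneg h1 (Finset.sum_nonneg h2)

lemma qmt_mono {n m : ℕ} {g : Fin m → MvPolynomial (Fin n) ℝ} {N N' : ℕ} (h : N ≤ N') :
    QMtrunc g N ⊆ QMtrunc g N' := by
  rintro f ⟨s₀, s, h0, hs, hd0, hd, rfl⟩
  exact ⟨s₀, s, h0, hs, hd0.trans h, fun i => (hd i).trans h, rfl⟩

lemma qm_exists_trunc {n m : ℕ} {g : Fin m → MvPolynomial (Fin n) ℝ}
    {f : MvPolynomial (Fin n) ℝ} (hf : f ∈ QM g) : ∃ N, f ∈ QMtrunc g N := by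
  obtain ⟨s₀, s, h0, hs, rfl⟩ := hf
  refine ⟨max s₀.totalDegree (Finset.univ.sup fun i => (g i * s i).totalDegree),
    s₀, s, h0, hs, le_max_left _ _, fun i => le_max_of_le_right ?_, rfl⟩
  exact Finset.le_sup (f := fun i => (g i * s i).totalDegree) (Finset.mem_univ i)

lemma qmt_add {n m : ℕ} {g : Fin m → MvPolynomial (Fin n) ℝ} {N : ℕ}
    {f f' : MvPolynomial (Fin n) ℝ} (hf : f ∈ QMtrunc g N) (hf' : f' ∈ QMtrunc g N) :
    f + f' ∈ QMtrunc g N := by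
  obtain ⟨s₀, s, h0, hs, hd0, hd, rfl⟩ := hf
  obtain ⟨t₀, t, k0, ks, kd0, kd, rfl⟩ := hf'
  refine ⟨s₀ + t₀, fun i => s i + t i, sos_add h0 k0, fun i => sos_add (hs i) (ks i),
    (totalDegree_add _ _).trans (max_le hd0 kd0), fun i => ?_, ?_⟩
  · rw [mul_add]
    exact (totalDegree_add _ _).trans (max_le (hd i) (kd i))
  · simp only [mul_add, Finset.sum_add_distrib]
    ring

lemma qmt_C {n m : ℕ} {g : Fin m → MvPolynomial (Fin n) ℝ} {N : ℕ} {r : ℝ} (hr : 0 ≤ r) :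
    (C r : MvPolynomial (Fin n) ℝ) ∈ QMtrunc g N := by
  refine ⟨C r, fun _ => 0, sos_C hr, fun _ => sos_zero, by simp, fun i => by simp, by simp⟩

lemma qmt_zero {n m : ℕ} {g : Fin m → MvPolynomial (Fin n) ℝ} {N : ℕ} :
    (0 : MvPolynomial (Fin n) ℝ) ∈ QMtrunc g N := by
  have := qmt_C (g := g) (N := N) (r := 0) le_rfl
  simpa using this

lemma qmt_C_mul {n m : ℕ} {g : Fin m → MvPolynomial (Fin n) ℝ} {N : ℕ} {r : ℝ} (hr : 0 ≤ r)
    {f : MvPolynomial (Fin n) ℝ} (hf : f ∈ QMtrunc g N) : C r * f ∈ QMtrunc g N := by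
  obtain ⟨s₀, s, h0, hs, hd0, hd, rfl⟩ := hf
  have hdeg : ∀ p : MvPolynomial (Fin n) ℝ, (C r * p).totalDegree ≤ p.totalDegree := fun p =>
    (totalDegree_mul _ _).trans (by simp)
  refine ⟨C r * s₀, fun i => C r * s i, sos_C_mul hr h0, fun i => sos_C_mul hr (hs i),
    (hdeg s₀).trans hd0, fun i => ?_, ?_⟩
  · refine le_trans (le_of_eq (by ring_nf)) ((hdeg (g i * s i)).trans (hd i))
  · rw [mul_add, Finset.mul_sum]
    exact congrArg _ (Finset.sum_congr rfl fun i _ => by ring)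

set_option maxHeartbeats 1000000 in
theorem stmt9 {n m : ℕ} (g : Fin m → MvPolynomial (Fin n) ℝ)
    (harch : ∀ f : MvPolynomial (Fin n) ℝ, ∃ N : ℕ, (N : MvPolynomial (Fin n) ℝ) + f ∈ QM g)
    (hputinar : ∀ f : MvPolynomial (Fin n) ℝ,
      (∀ x : Fin n → ℝ, (∀ i, 0 ≤ MvPolynomial.eval x (g i)) → 0 < MvPolynomial.eval x f) →
      f ∈ QM g) :
    ∀ L : ℕ, ∃ N : ℕ, ∀ f : MvPolynomial (Fin n) ℝ,
      f.totalDegree ≤ L → polyNorm f ≤ L →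
      (∀ x : Fin n → ℝ, (∀ i, 0 ≤ MvPolynomial.eval x (g i)) →
        (L : ℝ)⁻¹ ≤ MvPolynomial.eval x f) →
      f ∈ QMtrunc g N := by
  classical
  intro L
  rcases Nat.eq_zero_or_pos L with hL | hL
  · refine ⟨0, fun f hdeg hnorm _ => ?_⟩
    subst hL
    have hn : polyNorm f ≤ 0 := by simpa using hnorm
    have hf0 : f = 0 := by
      rw [← MvPolynomial.support_eq_empty]
      by_contra hne
      obtain ⟨d, hd⟩ := Finset.nonempty_iff_ne_empty.mpr hne
      have hpos : 0 < polyNorm f :=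
        Finset.sum_pos' (fun e _ => abs_nonneg _)
          ⟨d, hd, abs_pos.mpr (MvPolynomial.mem_support_iff.mp hd)⟩
      linarith
    rw [hf0]; exact qmt_zero
  · have hLpos : (0:ℝ) < L := by exact_mod_cast hL
    set ε : ℝ := (L:ℝ)⁻¹ with hεdef
    have hε : 0 < ε := inv_pos.mpr hLpos
    set A : Finset (Fin n →₀ ℕ) :=
      Finset.Iic (Finsupp.equivFunOnFinite.symm fun _ : Fin n => L) with hAdef
    have hmemA : ∀ {p : MvPolynomial (Fin n) ℝ}, p.totalDegree ≤ L → p.support ⊆ A := by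
      intro p hp d hd
      rw [hAdef, Finset.mem_Iic]
      have hds : (d.sum fun _ e => e) ≤ L := (MvPolynomial.le_totalDegree hd).trans hp
      intro i
      have h1 : d i ≤ d.sum fun _ e => e := by
        by_cases hi : i ∈ d.support
        · exact Finset.single_le_sum (f := fun j => d j) (fun j _ => Nat.zero_le _) hi
        · simp [Finsupp.notMem_support_iff.mp hi]
      simpa [Finsupp.equivFunOnFinite] using h1.trans hds
    have harch2 : ∀ α : Fin n →₀ ℕ, ∃ (c N : ℕ),
        (c : MvPolynomial (Fin n) ℝ) + MvPolynomial.monomial α 1 ∈ QMtrunc g N := by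
      intro α
      obtain ⟨c, hc⟩ := harch (MvPolynomial.monomial α 1)
      obtain ⟨N, hN⟩ := qm_exists_trunc hc
      exact ⟨c, N, hN⟩
    choose cp Np hp using harch2
    have harch3 : ∀ α : Fin n →₀ ℕ, ∃ (c N : ℕ),
        (c : MvPolynomial (Fin n) ℝ) - MvPolynomial.monomial α 1 ∈ QMtrunc g N := by
      intro α
      obtain ⟨c, hc⟩ := harch (-(MvPolynomial.monomial α 1))
      obtain ⟨N, hN⟩ := qm_exists_trunc hc
      exact ⟨c, N, by rwa [sub_eq_add_neg]⟩
    choose cm Nm hm using harch3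
    set Cb : (Fin n →₀ ℕ) → ℝ := fun α => max (cp α) (cm α) with hCbdef
    have hCb0 : ∀ α, 0 ≤ Cb α := fun α => le_max_of_le_left (Nat.cast_nonneg _)
    set Ct : ℝ := ∑ α ∈ A, Cb α with hCtdef
    have hCt : 0 ≤ Ct := Finset.sum_nonneg fun α _ => hCb0 α
    set η : ℝ := ε / (4 * (Ct + 1)) with hηdef
    have hη : 0 < η := div_pos hε (by linarith)
    have hηCt : η * Ct ≤ ε / 4 := by
      have h1 : η * (Ct + 1) = ε / 4 := by
        rw [hηdef]; field_simp
      nlinarith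
    set B : ℤ := ⌈(L:ℝ)/η⌉ with hBdef
    set N1 : ℕ := A.sup fun α => max (Np α) (Nm α) with hN1def
    set Nq : MvPolynomial (Fin n) ℝ → ℕ := fun q =>
      if h : q - MvPolynomial.C (ε/4) ∈ QM g then Classical.choose (qm_exists_trunc h) else 0
      with hNqdef
    have hNq : ∀ q, (h : q - MvPolynomial.C (ε/4) ∈ QM g) →
        q - MvPolynomial.C (ε/4) ∈ QMtrunc g (Nq q) := by
      intro q h
      simp only [hNqdef, dif_pos h]
      exact Classical.choose_spec (qm_exists_trunc h)
    set F : ({x // x ∈ A} → {y // y ∈ Finset.Icc (-B) B}) →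
        MvPolynomial (Fin n) ℝ := fun v =>
      ∑ a ∈ A.attach, MvPolynomial.monomial (a : Fin n →₀ ℕ) (((v a : ℤ) : ℝ) * η) with hFdef
    set N2 : ℕ := Finset.univ.sup fun v => Nq (F v) with hN2def
    refine ⟨max N1 N2, fun f hdeg hnorm hSpos => ?_⟩
    have hfsupp : f.support ⊆ A := hmemA hdeg
    have hnorm' : ∑ d ∈ f.support, |f.coeff d| ≤ (L:ℝ) := hnorm
    have hcoeff : ∀ α, |f.coeff α| ≤ (L:ℝ) := by
      intro α
      by_cases hα : α ∈ f.support
      · exact le_trans (Finset.single_le_sum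
          (f := fun d => |f.coeff d|) (fun d _ => abs_nonneg _) hα) hnorm'
      · rw [MvPolynomial.notMem_support_iff.mp hα]
        simpa using hLpos.le
    have hwB : ∀ α, ⌊f.coeff α / η⌋ ∈ Finset.Icc (-B) B := by
      intro α
      have habs := abs_le.mp (hcoeff α)
      have hdiv1 : -((L:ℝ)/η) ≤ f.coeff α / η := by
        rw [← neg_div]
        exact (div_le_div_iff_of_pos_right hη).mpr habs.1
      have hdiv2 : f.coeff α / η ≤ (L:ℝ)/η := (div_le_div_iff_of_pos_right hη).mpr habs.2
      rw [Finset.mem_Icc]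
      constructor
      · rw [Int.le_floor]
        push_cast
        calc (-(B:ℝ)) ≤ -((L:ℝ)/η) := neg_le_neg (Int.le_ceil _)
          _ ≤ _ := hdiv1
      · have h1 : ((⌊f.coeff α / η⌋ : ℤ) : ℝ) ≤ (B:ℝ) :=
          le_trans (le_trans (Int.floor_le _) hdiv2) (Int.le_ceil _)
        exact_mod_cast h1
    set v0 : {x // x ∈ A} → {y // y ∈ Finset.Icc (-B) B} :=
      fun a => ⟨⌊f.coeff (a : Fin n →₀ ℕ) / η⌋, hwB _⟩ with hv0def
    set q : MvPolynomial (Fin n) ℝ := F v0 with hqdef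
    set w : (Fin n →₀ ℕ) → ℝ := fun α => (⌊f.coeff α / η⌋ : ℝ) * η with hwdef
    have hqsum : q = ∑ α ∈ A, MvPolynomial.monomial α (w α) := by
      rw [hqdef, hFdef]
      exact Finset.sum_attach A (fun α => MvPolynomial.monomial α (w α))
    have hqc : ∀ β, q.coeff β = if β ∈ A then w β else 0 := by
      intro β
      rw [hqsum, MvPolynomial.coeff_sum]
      simp only [MvPolynomial.coeff_monomial]
      exact Finset.sum_ite_eq' A β w
    set p : MvPolynomial (Fin n) ℝ := f - q with hpdef
    have hpA : ∀ α ∉ A, p.coeff α = 0 := by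
      intro α hα
      rw [hpdef, MvPolynomial.coeff_sub, hqc, if_neg hα,
        MvPolynomial.notMem_support_iff.mp (fun h => hα (hfsupp h)), sub_zero]
    have hpsmall : ∀ α, |p.coeff α| ≤ η := by
      intro α
      by_cases hα : α ∈ A
      · rw [hpdef, MvPolynomial.coeff_sub, hqc, if_pos hα, hwdef]
        set c := f.coeff α with hcdef
        have h1 : (⌊c / η⌋ : ℝ) * η ≤ c := by
          have := Int.floor_le (c / η)
          have h2 := mul_le_mul_of_nonneg_right this hη.le
          rwa [div_mul_cancel₀ c (ne_of_gt hη)] at h2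
        have h2 : c < (⌊c / η⌋ : ℝ) * η + η := by
          have := Int.lt_floor_add_one (c / η)
          have h3 := mul_lt_mul_of_pos_right this hη
          rwa [div_mul_cancel₀ c (ne_of_gt hη), add_mul, one_mul] at h3
        rw [abs_le]
        constructor <;> linarith
      · rw [hpA α hα]
        simpa using hη.le
    have hpsupp : p.support ⊆ A := fun d hd => by
      by_contra h
      exact MvPolynomial.mem_support_iff.mp hd (hpA d h)
    have hpsum : p = ∑ α ∈ A, MvPolynomial.monomial α (p.coeff α) := by
      conv_lhs => rw [MvPolynomial.as_sum p]
      exact Finset.sum_subset hpsupp (fun d _ hd => by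
        rw [MvPolynomial.notMem_support_iff.mp hd, map_zero])
    have hmonobd : ∀ (x : Fin n → ℝ), (∀ i, 0 ≤ MvPolynomial.eval x (g i)) →
        ∀ α ∈ A, |MvPolynomial.eval x (MvPolynomial.monomial α (1:ℝ))| ≤ Cb α := by
      intro x hx α _
      have h1 := qm_eval_nonneg (qmt_subset_qm (hp α)) hx
      have h2 := qm_eval_nonneg (qmt_subset_qm (hm α)) hx
      rw [map_add, map_natCast] at h1
      rw [map_sub, map_natCast] at h2
      rw [abs_le, hCbdef]
      constructor
      · have : -((cp α : ℝ)) ≤ MvPolynomial.eval x (MvPolynomial.monomial α 1) := by linarith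
        refine le_trans (neg_le_neg (le_max_left _ _)) this
      · exact le_trans (by linarith) (le_max_right (cp α : ℝ) (cm α : ℝ))
    have hpeval : ∀ (x : Fin n → ℝ), (∀ i, 0 ≤ MvPolynomial.eval x (g i)) →
        |MvPolynomial.eval x p| ≤ ε/4 := by
      intro x hx
      rw [hpsum, map_sum]
      calc |∑ α ∈ A, MvPolynomial.eval x (MvPolynomial.monomial α (p.coeff α))|
          ≤ ∑ α ∈ A, |MvPolynomial.eval x (MvPolynomial.monomial α (p.coeff α))| :=
            Finset.abs_sum_le_sum_abs _ _
        _ ≤ ∑ α ∈ A, η * Cb α := by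
            refine Finset.sum_le_sum fun α hα => ?_
            have heq : MvPolynomial.monomial α (p.coeff α)
                = MvPolynomial.C (p.coeff α) * MvPolynomial.monomial α 1 := by
              rw [MvPolynomial.C_mul_monomial, mul_one]
            rw [heq, map_mul, abs_mul, MvPolynomial.eval_C]
            exact mul_le_mul (hpsmall α) (hmonobd x hx α hα) (abs_nonneg _) hη.le
        _ = η * Ct := by rw [hCtdef, Finset.mul_sum]
        _ ≤ ε/4 := hηCt
    have hqmem : q - MvPolynomial.C (ε/4) ∈ QM g := by
      apply hputinar
      intro x hx
      have h1 : ε ≤ MvPolynomial.eval x f := hSpos x hx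
      have h2 := abs_le.mp (hpeval x hx)
      have h3 : MvPolynomial.eval x p
          = MvPolynomial.eval x f - MvPolynomial.eval x q := by
        rw [hpdef, map_sub]
      rw [map_sub, MvPolynomial.eval_C]
      rw [h3] at h2
      linarith [h2.1, h2.2]
    have hq1 : q - MvPolynomial.C (ε/4) ∈ QMtrunc g (Nq q) := hNq q hqmem
    have hq2 : Nq q ≤ N2 := by
      rw [hqdef, hN2def]
      exact Finset.le_sup (f := fun v => Nq (F v)) (Finset.mem_univ v0)
    have hpiece1 : q - MvPolynomial.C (ε/4) ∈ QMtrunc g (max N1 N2) :=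
      qmt_mono (hq2.trans (le_max_right _ _)) hq1
    -- second piece
    set E : (Fin n →₀ ℕ) → ℝ := fun α =>
      if 0 ≤ p.coeff α then (cp α : ℝ) else (cm α : ℝ) with hEdef
    have hE : ∀ α, 0 ≤ E α ∧ E α ≤ Cb α := by
      intro α
      by_cases h : 0 ≤ p.coeff α
      · simp only [hEdef, hCbdef, if_pos h]
        exact ⟨Nat.cast_nonneg _, le_max_left _ _⟩
      · simp only [hEdef, hCbdef, if_neg h]
        exact ⟨Nat.cast_nonneg _, le_max_right _ _⟩
    set t : (Fin n →₀ ℕ) → MvPolynomial (Fin n) ℝ := fun α =>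
      if 0 ≤ p.coeff α then
        MvPolynomial.C (p.coeff α) * ((cp α : MvPolynomial (Fin n) ℝ) + MvPolynomial.monomial α 1)
      else
        MvPolynomial.C (-(p.coeff α)) * ((cm α : MvPolynomial (Fin n) ℝ) - MvPolynomial.monomial α 1)
      with htdef
    have ht_mem : ∀ α ∈ A, t α ∈ QMtrunc g N1 := by
      intro α hα
      have hN : max (Np α) (Nm α) ≤ N1 :=
        Finset.le_sup (f := fun α => max (Np α) (Nm α)) hα
      by_cases h : 0 ≤ p.coeff α
      · simp only [htdef, if_pos h]
        exact qmt_C_mul h (qmt_mono ((le_max_left _ _).trans hN) (hp α))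
      · simp only [htdef, if_neg h]
        exact qmt_C_mul (by linarith [not_le.mp h]) (qmt_mono ((le_max_right _ _).trans hN) (hm α))
    have ht_eq : ∀ α, t α = MvPolynomial.C (|p.coeff α| * E α)
        + MvPolynomial.monomial α (p.coeff α) := by
      intro α
      by_cases h : 0 ≤ p.coeff α
      · simp only [htdef, hEdef, if_pos h]
        rw [abs_of_nonneg h, mul_add, MvPolynomial.C_mul_monomial, mul_one]
        congr 1
        rw [← map_natCast (MvPolynomial.C : ℝ →+* MvPolynomial (Fin n) ℝ), ← map_mul]
      · simp only [htdef, hEdef, if_neg h]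
        rw [abs_of_neg (not_le.mp h), mul_sub, MvPolynomial.C_mul_monomial, mul_one]
        rw [← map_natCast (MvPolynomial.C : ℝ →+* MvPolynomial (Fin n) ℝ), ← map_mul,
          sub_eq_add_neg, ← map_neg]
        congr 1
        ring
    have hsum_t : ∑ α ∈ A, t α
        = MvPolynomial.C (∑ α ∈ A, |p.coeff α| * E α) + p := by
      calc ∑ α ∈ A, t α = ∑ α ∈ A, (MvPolynomial.C (|p.coeff α| * E α)
              + MvPolynomial.monomial α (p.coeff α)) := Finset.sum_congr rfl fun α _ => ht_eq α
        _ = MvPolynomial.C (∑ α ∈ A, |p.coeff α| * E α) + p := by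
            rw [Finset.sum_add_distrib, map_sum, ← hpsum]
    set r : ℝ := ε/4 - ∑ α ∈ A, |p.coeff α| * E α with hrdef
    have hr : 0 ≤ r := by
      have h1 : ∑ α ∈ A, |p.coeff α| * E α ≤ ∑ α ∈ A, η * Cb α := by
        refine Finset.sum_le_sum fun α hα => ?_
        exact mul_le_mul (hpsmall α) (hE α).2 (hE α).1 hη.le
      have h2 : ∑ α ∈ A, η * Cb α = η * Ct := by rw [hCtdef, Finset.mul_sum]
      rw [hrdef]
      linarith
    have hpiece2 : MvPolynomial.C (ε/4) + p ∈ QMtrunc g (max N1 N2) := by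
      have heq : MvPolynomial.C (ε/4) + p = MvPolynomial.C r + ∑ α ∈ A, t α := by
        rw [hsum_t, hrdef, map_sub]
        ring
      rw [heq]
      refine qmt_mono (le_max_left N1 N2) (qmt_add (qmt_C hr) ?_)
      exact Finset.sum_induction t (· ∈ QMtrunc g N1) (fun a b ha hb => qmt_add ha hb)
        qmt_zero ht_mem
    have hfinal : f = (q - MvPolynomial.C (ε/4)) + (MvPolynomial.C (ε/4) + p) := by
      rw [hpdef]; ring
    rw [hfinal]
    exact qmt_add hpiece1 hpiece2
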